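/- Fix W₀ ∈ V_s and Z ∈ V_{t−1} with ℓ_q(Z, W₀) = k. The number of t-dimensional subspaces U ⊇ Z with ℓ_q(U, W₀) = k equals [s−(t−1−k) choose 1]_q = (q^{s−t+1+k}−1)/(q−1), and the number with ℓ_q(U, W₀) = k+1 equals [n−(s+k) choose 1]_q · q^{s−(t−(k+1))}. -/

import Mathlib

/-!
Since `dim U - dim (U ∩ W₀) = dim (U + W₀) - dim W₀`, a subspace `U ⊇ Z` with
`dim U = dim Z + 1` has `ℓ(U) = ℓ(Z)` if `U ⊆ Z + W₀` and `ℓ(U) = ℓ(Z) + 1` otherwise.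
The subspaces `U ⊇ Z` of dimension `dim Z + 1` inside a subspace `T ⊇ Z` are the points of the
projective space of `T / Z`; taking `T = Z + W₀` (of dimension `s + k`) and `T = F^n` gives
`[s + k - u]_q` and `[n - u]_q - [s + k - u]_q = [n - s - k]_q q^(s + k - u)`.
-/

open Module

/-- The `q`-factorial `a!_q = ∏_{k=1}^a (q^k - 1)/(q - 1)`. -/
noncomputable def qFact (q : ℚ) (a : ℕ) : ℚ := ∏ k ∈ Finset.range a, (q ^ (k + 1) - 1) / (q - 1)

/-- The Gaussian binomial coefficient `[a choose b]_q = a!_q / (b!_q (a-b)!_q)`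
(and `0` when `b > a`). -/
noncomputable def qChoose (q : ℚ) (a b : ℕ) : ℚ :=
  if b ≤ a then qFact q a / (qFact q b * qFact q (a - b)) else 0

theorem qFact_ne_zero {q : ℚ} (hq : 1 < q) (a : ℕ) : qFact q a ≠ 0 :=
  Finset.prod_ne_zero_iff.2 fun k _ ↦
    div_ne_zero (sub_ne_zero.2 (one_lt_pow₀ hq k.succ_ne_zero).ne') (sub_ne_zero.2 hq.ne')

theorem qChoose_one {q : ℚ} (hq : 1 < q) (m : ℕ) : qChoose q m 1 = (q ^ m - 1) / (q - 1) := by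
  cases m with
  | zero => simp [qChoose]
  | succ m =>
    have hq₁ : q - 1 ≠ 0 := sub_ne_zero.2 hq.ne'
    rw [qChoose, if_pos (Nat.le_add_left 1 m), Nat.add_sub_cancel, qFact, Finset.prod_range_succ,
      ← qFact]
    have hfact₁ : qFact q 1 = 1 := by simp [qFact, hq₁]
    rw [hfact₁, one_mul, mul_div_cancel_left₀ _ (qFact_ne_zero hq m)]

theorem qChoose_one_add_sub {q : ℚ} (hq : 1 < q) (a b : ℕ) :
    qChoose q (a + b) 1 - qChoose q a 1 = qChoose q b 1 * q ^ a := by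
  have hq₁ : q - 1 ≠ 0 := sub_ne_zero.2 hq.ne'
  simp only [qChoose_one hq]
  field_simp
  ring

section Subspaces

variable {F V : Type*} [DivisionRing F] [AddCommGroup V] [Module F V] [FiniteDimensional F V]

theorem finrank_sub_finrank_inf_eq (U W : Submodule F V) :
    finrank F U - finrank F ↥(U ⊓ W) = finrank F ↥(U ⊔ W) - finrank F W := by
  have := Submodule.finrank_sup_add_finrank_inf_eq U W
  omega

theorem finrank_sup_eq_succ_of_not_le {Z U T : Submodule F V}
    (hZU : Z ≤ U) (hU : finrank F U = finrank F Z + 1) (hZT : Z ≤ T) (hUT : ¬U ≤ T) :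
    finrank F ↥(U ⊔ T) = finrank F T + 1 := by
  have hinf : U ⊓ T < U := inf_lt_left.2 hUT
  have h₁ := Submodule.finrank_lt_finrank_of_lt hinf
  have h₂ := Submodule.finrank_mono (le_inf hZU hZT)
  have := Submodule.finrank_sup_add_finrank_inf_eq U T
  omega

theorem finrank_comap_mkQ (Z : Submodule F V) (L : Submodule F (V ⧸ Z)) :
    finrank F (L.comap Z.mkQ) = finrank F L + finrank F Z := by
  set U := L.comap Z.mkQ
  have hZU : Z ≤ U := fun z hz ↦ by simp [U, (Submodule.Quotient.mk_eq_zero Z).2 hz]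
  have hrange : LinearMap.range (Z.mkQ ∘ₗ U.subtype) = L := by
    rw [LinearMap.range_comp, Submodule.range_subtype, Submodule.map_comap_eq,
      Submodule.range_mkQ, top_inf_eq]
  have hker : LinearMap.ker (Z.mkQ ∘ₗ U.subtype) = Z.comap U.subtype := by
    rw [LinearMap.ker_comp, Submodule.ker_mkQ]
  rw [← LinearMap.finrank_range_add_finrank_ker (Z.mkQ ∘ₗ U.subtype), hrange, hker,
    (Submodule.comapSubtypeEquivOfLe hZU).finrank_eq]

theorem finrank_sub_finrank_inf_of_le_sup {Z U W : Submodule F V} (hZU : Z ≤ U)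
    (hUZW : U ≤ Z ⊔ W) :
    finrank F U - finrank F ↥(U ⊓ W) = finrank F Z - finrank F ↥(Z ⊓ W) := by
  rw [finrank_sub_finrank_inf_eq U, finrank_sub_finrank_inf_eq Z,
    le_antisymm (sup_le hUZW le_sup_right) (sup_le_sup_right hZU W)]

theorem finrank_sub_finrank_inf_of_not_le_sup {Z U W : Submodule F V} (hZU : Z ≤ U)
    (hU : finrank F U = finrank F Z + 1) (hUZW : ¬U ≤ Z ⊔ W) :
    finrank F U - finrank F ↥(U ⊓ W) = finrank F Z - finrank F ↥(Z ⊓ W) + 1 := by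
  have hsup : U ⊔ W = U ⊔ (Z ⊔ W) := by rw [← sup_assoc, sup_eq_left.2 hZU]
  have := Submodule.finrank_mono (le_sup_right : W ≤ Z ⊔ W)
  rw [finrank_sub_finrank_inf_eq U, finrank_sub_finrank_inf_eq Z, hsup,
    finrank_sup_eq_succ_of_not_le hZU hU le_sup_left hUZW]
  omega

theorem finrank_sub_finrank_inf_eq_iff_le_sup {Z U W : Submodule F V} (hZU : Z ≤ U)
    (hU : finrank F U = finrank F Z + 1) :
    (finrank F U - finrank F ↥(U ⊓ W) = finrank F Z - finrank F ↥(Z ⊓ W) ↔ U ≤ Z ⊔ W) ∧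
      (finrank F U - finrank F ↥(U ⊓ W) = finrank F Z - finrank F ↥(Z ⊓ W) + 1 ↔
        ¬U ≤ Z ⊔ W) := by
  by_cases hUZW : U ≤ Z ⊔ W
  · simp [hUZW, finrank_sub_finrank_inf_of_le_sup hZU hUZW]
  · simp [hUZW, finrank_sub_finrank_inf_of_not_le_sup hZU hU hUZW]

end Subspaces

theorem Nat.card_subtype_and_add_card_subtype_and_not {α : Type*} [Finite α] (p q : α → Prop) :
    Nat.card {x // p x ∧ q x} + Nat.card {x // p x ∧ ¬q x} = Nat.card {x // p x} := by
  classical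
  rw [← Nat.card_sum]
  exact Nat.card_congr <|
    (Equiv.sumCongr (Equiv.subtypeSubtypeEquivSubtypeInter p q).symm
      (Equiv.subtypeSubtypeEquivSubtypeInter p (¬q ·)).symm).trans
    (Equiv.sumCompl fun x : {x // p x} ↦ q x.1)

section Counting

variable {F V : Type*} [DivisionRing F] [AddCommGroup V] [Module F V] [Finite F] [Finite V]

theorem natCast_card_lines :
    (Nat.card {L : Submodule F V // finrank F L = 1} : ℚ) =
      qChoose (Nat.card F) (finrank F V) 1 := by
  have hF : 1 < Nat.card F := Finite.one_lt_card
  have hF' : (1 : ℚ) < Nat.card F := by exact_mod_cast hF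
  rw [qChoose_one hF', eq_div_iff (sub_ne_zero.2 hF'.ne'), ← Nat.cast_pow,
    ← Module.natCard_eq_pow_finrank, Projectivization.card' F V,
    Nat.card_congr (Projectivization.equivSubmodule F V)]
  push_cast [Nat.cast_sub hF.le]
  ring

theorem natCast_card_covers (Z : Submodule F V) :
    (Nat.card {U : Submodule F V // Z ≤ U ∧ finrank F U = finrank F Z + 1} : ℚ) =
      qChoose (Nat.card F) (finrank F V - finrank F Z) 1 := by
  have e : {L : Submodule F (V ⧸ Z) // finrank F L = 1} ≃
      {U : Submodule F V // Z ≤ U ∧ finrank F U = finrank F Z + 1} :=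
    ((Submodule.comapMkQRelIso Z).toEquiv.subtypeEquiv fun L ↦ by
        change _ ↔ finrank F (L.comap Z.mkQ) = _
        rw [finrank_comap_mkQ]
        omega).trans
      (Equiv.subtypeSubtypeEquivSubtypeInter (· ∈ Set.Ici Z) _)
  have : Finite (V ⧸ Z) := Module.finite_of_finite F
  rw [← Nat.card_congr e, natCast_card_lines, ← Z.finrank_quotient_add_finrank, Nat.add_sub_cancel]

theorem natCast_card_covers_le {Z T : Submodule F V} (hZT : Z ≤ T) :
    (Nat.card {U : Submodule F V // Z ≤ U ∧ finrank F U = finrank F Z + 1 ∧ U ≤ T} : ℚ) =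
      qChoose (Nat.card F) (finrank F T - finrank F Z) 1 := by
  let e := Submodule.MapSubtype.orderIso T
  set Z' := e.symm ⟨Z, hZT⟩
  have hZ' : finrank F Z' = finrank F Z := by
    rw [← Submodule.finrank_map_subtype_eq]
    exact congrArg (fun U : {U // U ≤ T} ↦ finrank F U.1) (e.apply_symm_apply ⟨Z, hZT⟩)
  have e' : {U' : Submodule F T // Z' ≤ U' ∧ finrank F U' = finrank F Z' + 1} ≃
      {U : Submodule F V // Z ≤ U ∧ finrank F U = finrank F Z + 1 ∧ U ≤ T} :=
    (e.toEquiv.subtypeEquiv fun U' ↦ ?_).trans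
      ((Equiv.subtypeSubtypeEquivSubtypeInter (· ≤ T)
          fun U ↦ Z ≤ U ∧ finrank F U = finrank F Z + 1).trans
        (Equiv.subtypeEquivRight fun U ↦ by tauto))
  · rw [← Nat.card_congr e', natCast_card_covers, hZ']
  · rw [← e.le_iff_le, e.apply_symm_apply, Subtype.mk_le_mk, hZ',
      ← Submodule.finrank_map_subtype_eq]
    rfl

theorem natCast_card_covers_not_le {Z T : Submodule F V} (hZT : Z ≤ T) :
    (Nat.card {U : Submodule F V // Z ≤ U ∧ finrank F U = finrank F Z + 1 ∧ ¬U ≤ T} : ℚ) =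
      qChoose (Nat.card F) (finrank F V - finrank F T) 1 *
        (Nat.card F : ℚ) ^ (finrank F T - finrank F Z) := by
  have hsplit := Nat.card_subtype_and_add_card_subtype_and_not
    (fun U : Submodule F V ↦ Z ≤ U ∧ finrank F U = finrank F Z + 1) (· ≤ T)
  simp only [and_assoc] at hsplit
  have hZ := Submodule.finrank_mono hZT
  have hT := Submodule.finrank_le T
  rw [← qChoose_one_add_sub (by exact_mod_cast Finite.one_lt_card), ← natCast_card_covers_le hZT,
    show finrank F T - finrank F Z + (finrank F V - finrank F T) = finrank F V - finrank F Z by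
      omega, ← natCast_card_covers, ← hsplit]
  push_cast
  ring

end Counting

theorem stmt16_general (q n s u k : ℕ) (F : Type) [Field F] [Fintype F] (hF : Fintype.card F = q)
    (W₀ Z : Submodule F (Fin n → F)) (hW₀ : finrank F W₀ = s) (hZ : finrank F Z = u)
    (hℓ : finrank F Z - finrank F ↥(Z ⊓ W₀) = k) :
    (Nat.card {U : Submodule F (Fin n → F) //
        Z ≤ U ∧ finrank F U = u + 1 ∧ finrank F U - finrank F ↥(U ⊓ W₀) = k} : ℚ) =
      qChoose q (s - (u - k)) 1 ∧
    (Nat.card {U : Submodule F (Fin n → F) //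
        Z ≤ U ∧ finrank F U = u + 1 ∧ finrank F U - finrank F ↥(U ⊓ W₀) = k + 1} : ℚ) =
      qChoose q (n - (s + k)) 1 * (q : ℚ) ^ (s - (u - k)) := by
  subst hF
  have hdim := Submodule.finrank_sup_add_finrank_inf_eq Z W₀
  have hinfZ := Submodule.finrank_mono (inf_le_left : Z ⊓ W₀ ≤ Z)
  have hinfW := Submodule.finrank_mono (inf_le_right : Z ⊓ W₀ ≤ W₀)
  have hsupV := Submodule.finrank_le (Z ⊔ W₀)
  have hn : finrank F (Fin n → F) = n := Module.finrank_fin_fun F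
  rw [← Nat.card_eq_fintype_card,
    show s - (u - k) = finrank F ↥(Z ⊔ W₀) - finrank F Z by omega,
    show n - (s + k) = finrank F (Fin n → F) - finrank F ↥(Z ⊔ W₀) by omega,
    ← natCast_card_covers_le le_sup_left, ← natCast_card_covers_not_le le_sup_left]
  subst hZ hℓ
  constructor <;> refine congrArg _ (Nat.card_congr (Equiv.subtypeEquivRight fun U ↦
    and_congr_right fun hZU ↦ and_congr_right fun hU ↦ ?_))
  exacts [(finrank_sub_finrank_inf_eq_iff_le_sup hZU hU).1,
    (finrank_sub_finrank_inf_eq_iff_le_sup hZU hU).2]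

/-- Fix `W₀ ∈ V_s` and `Z ∈ V_{t-1}` with `ℓ_q(Z,W₀) = k` (here `t = u+1`).  The
number of `t`-dimensional subspaces `U ⊇ Z` with `ℓ_q(U,W₀) = k` equals
`[s-(t-1-k) choose 1]_q`, and the number with `ℓ_q(U,W₀) = k+1` equals
`[n-(s+k) choose 1]_q · q^(s-(t-(k+1)))`. -/
theorem stmt16 (q n s u k : ℕ) (F : Type) [Field F] [Fintype F] (hF : Fintype.card F = q)
    (hk : k ≤ u) (hu : u + 1 ≤ s) (hsk : s + k ≤ n)
    (W₀ Z : Submodule F (Fin n → F)) (hW₀ : finrank F W₀ = s) (hZ : finrank F Z = u)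
    (hℓ : finrank F Z - finrank F ↥(Z ⊓ W₀) = k) :
    (Nat.card {U : Submodule F (Fin n → F) //
        Z ≤ U ∧ finrank F U = u + 1 ∧ finrank F U - finrank F ↥(U ⊓ W₀) = k} : ℚ) =
      qChoose q (s - (u - k)) 1 ∧
    (Nat.card {U : Submodule F (Fin n → F) //
        Z ≤ U ∧ finrank F U = u + 1 ∧ finrank F U - finrank F ↥(U ⊓ W₀) = k + 1} : ℚ) =
      qChoose q (n - (s + k)) 1 * (q : ℚ) ^ (s - (u - k)) :=
  stmt16_general q n s u k F hF W₀ Z hW₀ hZ hℓ
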